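/- arXiv:1001.1625 — 3 statements merged into one kernel-verified Lean document; each statement's English description precedes it below -/
import Mathlib

section
/- If the basis h_1, …, h_m is LLL-reduced with parameter δ ∈ (1/4, 1), then its first vector satisfies ‖h_1‖ ≤ α^{(m−1)/2} d_H, where d_H is the minimum distance of the lattice L(H) and α = 1/(δ − 1/4). -/
open scoped BigOperators

/-- Gram-Schmidt orthogonalization of the system of vectors `h`. -/
noncomputable def gso {n m : ℕ} (h : Fin m → EuclideanSpace ℝ (Fin n)) :
    Fin m → EuclideanSpace ℝ (Fin n) :=
  @InnerProductSpace.gramSchmidt ℝ (EuclideanSpace ℝ (Fin n)) _ _ _ (Fin m) _ _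
    (inferInstance : WellFoundedLT (Fin m)) h

/-- Gram-Schmidt coefficients `μ i j = ⟨h i, h* j⟩ / ‖h* j‖²`. -/
noncomputable def mu {n m : ℕ} (h : Fin m → EuclideanSpace ℝ (Fin n)) (i j : Fin m) : ℝ :=
  (inner ℝ (h i) (gso h j) : ℝ) / ‖gso h j‖ ^ 2

/-- The lattice generated by the vectors `h`. -/
def latticePts {n m : ℕ} (h : Fin m → EuclideanSpace ℝ (Fin n)) :
    Set (EuclideanSpace ℝ (Fin n)) :=
  {v | ∃ x : Fin m → ℤ, v = ∑ i, (x i : ℝ) • h i}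

/-- `a(H)`: the minimum norm of the Gram-Schmidt vectors. -/
noncomputable def aMin {n m : ℕ} (h : Fin m → EuclideanSpace ℝ (Fin n)) : ℝ :=
  ⨅ i, ‖gso h i‖

/-- `A(H)`: the maximum norm of the Gram-Schmidt vectors. -/
noncomputable def AMax {n m : ℕ} (h : Fin m → EuclideanSpace ℝ (Fin n)) : ℝ :=
  ⨆ i, ‖gso h i‖

/-- LLL-reducedness (size reduction + Lovász condition) with parameter `δ`. -/
def IsLLLReduced {n m : ℕ} (δ : ℝ) (h : Fin m → EuclideanSpace ℝ (Fin n)) : Prop :=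
  (∀ k l : Fin m, l < k → |mu h k l| ≤ 1 / 2) ∧
  (∀ k l : Fin m, (l : ℕ) + 1 = (k : ℕ) →
    δ * ‖gso h l‖ ^ 2 ≤ ‖gso h k + mu h k l • gso h l‖ ^ 2)

/-- Append the coordinate `c` to the vector `v`. -/
noncomputable def aug {n : ℕ} (v : EuclideanSpace ℝ (Fin n)) (c : ℝ) :
    EuclideanSpace ℝ (Fin (n + 1)) :=
  (WithLp.equiv 2 (Fin (n + 1) → ℝ)).symm (Fin.snoc ((WithLp.equiv 2 (Fin n → ℝ)) v) c)

/-- Columns of the augmented matrix `H̃`: the columns `(h i, 0)` followed by `(-y, t)`. -/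
noncomputable def augCols {n m : ℕ} (h : Fin m → EuclideanSpace ℝ (Fin n))
    (y : EuclideanSpace ℝ (Fin n)) (t : ℝ) : Fin (m + 1) → EuclideanSpace ℝ (Fin (n + 1)) :=
  Fin.snoc (fun i => aug (h i) 0) (aug (-y) t)

/-- `v` is a `γ`-unique shortest vector of the lattice `L`. -/
def IsUniqueShortest {N : ℕ} (L : Set (EuclideanSpace ℝ (Fin N))) (γ : ℝ)
    (v : EuclideanSpace ℝ (Fin N)) : Prop :=
  v ∈ L ∧ v ≠ 0 ∧ (∀ u ∈ L, u ≠ 0 → ‖v‖ ≤ ‖u‖) ∧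
    ∀ u ∈ L, ‖u‖ ≤ γ * ‖v‖ → ¬ LinearIndependent ℝ ![u, v]

/-!
If `x ≠ 0` is an integer vector and `j` is the last index with `x j ≠ 0`, then pairing
`v = ∑ xᵢ hᵢ` with the Gram–Schmidt vector `h*ⱼ` gives `⟪v, h*ⱼ⟫ = xⱼ ‖h*ⱼ‖²`, so by
Cauchy–Schwarz `‖h*ⱼ‖ ≤ |xⱼ| ‖h*ⱼ‖ ≤ ‖v‖`: every nonzero lattice vector is at least as long as
some `h*ⱼ`. Size reduction and the Lovász condition give `(δ - 1/4) ‖h*ₗ‖² ≤ ‖h*ₗ₊₁‖²`, hence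
`(δ - 1/4)^(m-1) ‖h₁‖² ≤ (δ - 1/4)^j ‖h*₁‖² ≤ ‖h*ⱼ‖² ≤ d_H²`.
-/

open InnerProductSpace

section GramSchmidt

variable {E : Type*} [NormedAddCommGroup E] [InnerProductSpace ℝ E]
  {ι : Type*} [LinearOrder ι] [LocallyFiniteOrderBot ι] [WellFoundedLT ι]

theorem real_inner_gramSchmidt_self (f : ι → E) (n : ι) :
    ⟪f n, gramSchmidt ℝ f n⟫_ℝ = ‖gramSchmidt ℝ f n‖ ^ 2 := by
  conv_lhs => rw [gramSchmidt_def'' ℝ f n]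
  rw [inner_add_left, sum_inner, real_inner_self_eq_norm_sq, add_eq_left]
  refine Finset.sum_eq_zero fun i hi => ?_
  rw [real_inner_smul_left, gramSchmidt_orthogonal ℝ f (Finset.mem_Iio.mp hi).ne, mul_zero]

theorem gramSchmidt_eq_self_of_isMin (f : ι → E) {n : ι} (hn : IsMin n) :
    gramSchmidt ℝ f n = f n := by
  rw [gramSchmidt_def, Finset.Iio_eq_empty.mpr hn, Finset.sum_empty, sub_zero]

variable [Fintype ι]

theorem real_inner_sum_smul_gramSchmidt (f : ι → E) (c : ι → ℝ) {j : ι}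
    (hc : ∀ i, j < i → c i = 0) :
    ⟪∑ i, c i • f i, gramSchmidt ℝ f j⟫_ℝ = c j * ‖gramSchmidt ℝ f j‖ ^ 2 := by
  rw [sum_inner, Finset.sum_eq_single j]
  · rw [real_inner_smul_left, real_inner_gramSchmidt_self]
  · intro i _ hij
    rcases hij.lt_or_gt with hlt | hgt
    · rw [real_inner_smul_left, real_inner_comm, gramSchmidt_inv_triangular ℝ f hlt, mul_zero]
    · rw [hc i hgt, zero_smul, inner_zero_left]
  · exact fun hj => absurd (Finset.mem_univ j) hj

theorem norm_gramSchmidt_le_norm_sum_intCast_smul (f : ι → E) (x : ι → ℤ) {j : ι}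
    (hxj : x j ≠ 0) (hx : ∀ i, j < i → x i = 0) :
    ‖gramSchmidt ℝ f j‖ ≤ ‖∑ i, (x i : ℝ) • f i‖ := by
  set g := gramSchmidt ℝ f j
  set v := ∑ i, (x i : ℝ) • f i
  have hcs := abs_real_inner_le_norm v g
  rw [real_inner_sum_smul_gramSchmidt f _ (j := j) fun i hi => by simp [hx i hi], abs_mul,
    abs_pow, abs_norm] at hcs
  have hxj1 : (1 : ℝ) ≤ |(x j : ℝ)| := by
    rw [← Int.cast_abs]; exact_mod_cast Int.one_le_abs hxj
  have hsq : ‖g‖ * ‖g‖ ≤ ‖v‖ * ‖g‖ := by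
    rw [← sq]; exact (le_mul_of_one_le_left (sq_nonneg _) hxj1).trans hcs
  rcases (norm_nonneg g).eq_or_lt with hg | hg
  · rw [← hg]; exact norm_nonneg v
  · exact le_of_mul_le_mul_right hsq hg

theorem exists_norm_gramSchmidt_le_norm_sum_intCast_smul (f : ι → E) {x : ι → ℤ} (hx : x ≠ 0) :
    ∃ j, ‖gramSchmidt ℝ f j‖ ≤ ‖∑ i, (x i : ℝ) • f i‖ := by
  classical
  have hsupp : (Finset.univ.filter (x · ≠ 0)).Nonempty := by
    obtain ⟨i, hi⟩ := Function.ne_iff.mp hx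
    exact ⟨i, by simpa using hi⟩
  obtain ⟨j, hj, hmax⟩ := Finset.exists_max_image _ id hsupp
  refine ⟨j, norm_gramSchmidt_le_norm_sum_intCast_smul f x (by simpa using hj) fun i hi => ?_⟩
  by_contra hxi
  exact (hmax i (by simpa using hxi)).not_gt hi

end GramSchmidt

theorem gso_eq_gramSchmidt {n m : ℕ} (h : Fin m → EuclideanSpace ℝ (Fin n)) :
    gso h = gramSchmidt ℝ h :=
  rfl

namespace IsLLLReduced

variable {n m : ℕ} {δ : ℝ} {h : Fin m → EuclideanSpace ℝ (Fin n)}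

theorem sub_quarter_mul_norm_gso_sq_le (hred : IsLLLReduced δ h) {k l : Fin m}
    (hlk : (l : ℕ) + 1 = k) : (δ - 1 / 4) * ‖gso h l‖ ^ 2 ≤ ‖gso h k‖ ^ 2 := by
  have hlov := hred.2 k l hlk
  have hsize := hred.1 k l (Fin.lt_def.mpr (by omega))
  have horth : ⟪gso h k, gso h l⟫_ℝ = 0 :=
    gramSchmidt_orthogonal ℝ h (Fin.ne_of_val_ne (by omega))
  rw [norm_add_sq_real, real_inner_smul_right, horth, norm_smul, Real.norm_eq_abs, mul_pow,
    sq_abs] at hlov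
  have hmu : mu h k l ^ 2 ≤ 1 / 4 := by
    nlinarith [sq_abs (mu h k l), abs_nonneg (mu h k l)]
  nlinarith [sq_nonneg ‖gso h l‖]

theorem pow_mul_norm_gso_sq_le (hred : IsLLLReduced δ h) (hδ : 1 / 4 ≤ δ) (hm : 0 < m) :
    ∀ (k : ℕ) (hk : k < m), (δ - 1 / 4) ^ k * ‖gso h ⟨0, hm⟩‖ ^ 2 ≤ ‖gso h ⟨k, hk⟩‖ ^ 2
  | 0, _ => by simp
  | k + 1, hk => calc
      (δ - 1 / 4) ^ (k + 1) * ‖gso h ⟨0, hm⟩‖ ^ 2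
          = (δ - 1 / 4) * ((δ - 1 / 4) ^ k * ‖gso h ⟨0, hm⟩‖ ^ 2) := by ring
      _ ≤ (δ - 1 / 4) * ‖gso h ⟨k, by omega⟩‖ ^ 2 :=
          mul_le_mul_of_nonneg_left (pow_mul_norm_gso_sq_le hred hδ hm k _) (by linarith)
      _ ≤ ‖gso h ⟨k + 1, hk⟩‖ ^ 2 := hred.sub_quarter_mul_norm_gso_sq_le rfl

end IsLLLReduced

theorem le_one_div_rpow_half_mul {a c d : ℝ} (ha : 0 ≤ a) (hc : 0 < c) (hd : 0 ≤ d) (k : ℕ)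
    (h : c ^ k * a ^ 2 ≤ d ^ 2) : a ≤ (1 / c) ^ ((k : ℝ) / 2) * d := by
  have hsq : ((1 / c) ^ ((k : ℝ) / 2)) ^ 2 = 1 / c ^ k := by
    rw [← Real.rpow_mul_natCast (by positivity), Nat.cast_ofNat, div_mul_cancel₀ _ two_ne_zero,
      Real.rpow_natCast, one_div_pow]
  rw [← pow_le_pow_iff_left₀ ha (by positivity) two_ne_zero, mul_pow, hsq,
    one_div_mul_eq_div, le_div_iff₀' (by positivity)]
  exact h

theorem statement2_general {n m : ℕ} (hm : 0 < m)
    (h : Fin m → EuclideanSpace ℝ (Fin n))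
    (δ : ℝ) (hδ : δ ∈ Set.Ioo (1/4 : ℝ) 1)
    (hred : IsLLLReduced δ h)
    (α : ℝ) (hα : α = 1 / (δ - 1/4))
    (dH : ℝ) (hdH : IsLeast {r : ℝ | ∃ v ∈ latticePts h, v ≠ 0 ∧ ‖v‖ = r} dH) :
    ‖h ⟨0, hm⟩‖ ≤ α ^ (((m : ℝ) - 1) / 2) * dH := by
  obtain ⟨hδ₁, hδ₂⟩ := hδ
  obtain ⟨v, ⟨x, rfl⟩, hv, rfl⟩ := hdH.1
  have hx : x ≠ 0 := by
    rintro rfl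
    simp at hv
  obtain ⟨j, hj⟩ := exists_norm_gramSchmidt_le_norm_sum_intCast_smul h hx
  rw [← gso_eq_gramSchmidt] at hj
  have hfirst : gso h ⟨0, hm⟩ = h ⟨0, hm⟩ :=
    gramSchmidt_eq_self_of_isMin h fun i _ => Fin.le_iff_val_le_val.mpr (Nat.zero_le _)
  have hchain : (δ - 1 / 4) ^ (m - 1) * ‖h ⟨0, hm⟩‖ ^ 2 ≤ ‖∑ i, (x i : ℝ) • h i‖ ^ 2 := calc
    (δ - 1 / 4) ^ (m - 1) * ‖h ⟨0, hm⟩‖ ^ 2 ≤ (δ - 1 / 4) ^ (j : ℕ) * ‖gso h ⟨0, hm⟩‖ ^ 2 := by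
        rw [hfirst]
        refine mul_le_mul_of_nonneg_right ?_ (sq_nonneg _)
        exact pow_le_pow_of_le_one (by linarith) (by linarith) (by omega)
    _ ≤ ‖gso h j‖ ^ 2 := hred.pow_mul_norm_gso_sq_le hδ₁.le hm j j.2
    _ ≤ _ := by gcongr
  rw [hα, ← Nat.cast_pred hm]
  exact le_one_div_rpow_half_mul (norm_nonneg _) (by linarith) (norm_nonneg _) _ hchain

/-- for an LLL-reduced basis, `‖h_1‖ ≤ α^((m-1)/2) d_H`. -/
theorem statement2 {n m : ℕ} (hm : 0 < m)
    (h : Fin m → EuclideanSpace ℝ (Fin n)) (hli : LinearIndependent ℝ h)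
    (δ : ℝ) (hδ : δ ∈ Set.Ioo (1/4 : ℝ) 1)
    (hred : IsLLLReduced δ h)
    (α : ℝ) (hα : α = 1 / (δ - 1/4))
    (dH : ℝ) (hdH : IsLeast {r : ℝ | ∃ v ∈ latticePts h, v ≠ 0 ∧ ‖v‖ = r} dH) :
    ‖h ⟨0, hm⟩‖ ≤ α ^ (((m : ℝ) - 1) / 2) * dH :=
  statement2_general hm h δ hδ hred α hα dH hdH
end

section
/- Let H ∈ M_{n×m}(ℝ) have linearly independent columns, x ∈ ℤ^m, y ∈ ℝ^n, w = y − Hx, t > 0, and set v = (Hx − y, t) ∈ ℝ^{n+1}. If u = (Hx′ − q y, q t) ∈ L(H̃) (with x′ ∈ ℤ^m, q ∈ ℤ) satisfies ‖u‖ ≤ α^{m/2} ‖v‖ for some α > 0, then ‖Hx′ − q·Hx‖ ≤ α^{m/2} √(‖w‖² + t²) · (1 + ‖w‖/t). -/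
open scoped BigOperators

/-
The first `n` coordinates of `u = (Hx' - q y, q t)` and its last one are both bounded by `‖u‖`.
Since `Hx' - q Hx = (Hx' - q y) + q w` and `|q| ≤ ‖u‖ / t`, the triangle inequality gives
`‖Hx' - q Hx‖ ≤ ‖u‖ (1 + ‖w‖ / t)`, and `‖v‖ = √(‖w‖² + t²)`.
-/

lemma norm_aug_sq {n : ℕ} (v : EuclideanSpace ℝ (Fin n)) (c : ℝ) :
    ‖aug v c‖ ^ 2 = ‖v‖ ^ 2 + c ^ 2 := by
  simp only [EuclideanSpace.norm_sq_eq, Real.norm_eq_abs, sq_abs, Fin.sum_univ_castSucc]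
  simp [aug]

lemma norm_aug {n : ℕ} (v : EuclideanSpace ℝ (Fin n)) (c : ℝ) :
    ‖aug v c‖ = √(‖v‖ ^ 2 + c ^ 2) := by
  rw [← norm_aug_sq, Real.sqrt_sq (norm_nonneg _)]

lemma norm_le_norm_aug {n : ℕ} (v : EuclideanSpace ℝ (Fin n)) (c : ℝ) : ‖v‖ ≤ ‖aug v c‖ := by
  rw [norm_aug]
  exact Real.le_sqrt_of_sq_le (le_add_of_nonneg_right (sq_nonneg c))

lemma abs_le_norm_aug {n : ℕ} (v : EuclideanSpace ℝ (Fin n)) (c : ℝ) : |c| ≤ ‖aug v c‖ := by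
  rw [norm_aug, ← Real.sqrt_sq_eq_abs]
  exact Real.sqrt_le_sqrt (le_add_of_nonneg_left (sq_nonneg _))

lemma norm_add_smul_le_mul_one_add {E : Type*} [SeminormedAddCommGroup E] [NormedSpace ℝ E]
    {a w : E} {q t R : ℝ} (ht : 0 < t) (ha : ‖a‖ ≤ R) (hq : |q| * t ≤ R) :
    ‖a + q • w‖ ≤ R * (1 + ‖w‖ / t) := by
  have hq' : |q| ≤ R / t := (le_div_iff₀ ht).mpr hq
  calc ‖a + q • w‖ ≤ ‖a‖ + |q| * ‖w‖ := by
        rw [← Real.norm_eq_abs, ← norm_smul]; exact norm_add_le _ _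
    _ ≤ R + R / t * ‖w‖ := by gcongr
    _ = R * (1 + ‖w‖ / t) := by ring

theorem statement5_general {n m : ℕ}
    (h : Fin m → EuclideanSpace ℝ (Fin n))
    (x x' : Fin m → ℤ) (q : ℤ) (y : EuclideanSpace ℝ (Fin n))
    (t : ℝ) (ht : 0 < t) (α : ℝ)
    (hu : ‖aug ((∑ i, (x' i : ℝ) • h i) - (q : ℝ) • y) ((q : ℝ) * t)‖ ≤
      α ^ ((m : ℝ) / 2) * ‖aug ((∑ i, (x i : ℝ) • h i) - y) t‖) :
    ‖(∑ i, (x' i : ℝ) • h i) - (q : ℝ) • ∑ i, (x i : ℝ) • h i‖ ≤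
      α ^ ((m : ℝ) / 2) * Real.sqrt (‖y - ∑ i, (x i : ℝ) • h i‖ ^ 2 + t ^ 2) *
        (1 + ‖y - ∑ i, (x i : ℝ) • h i‖ / t) := by
  set Hx := ∑ i, (x i : ℝ) • h i
  set Hx' := ∑ i, (x' i : ℝ) • h i
  have hqt := abs_le_norm_aug (Hx' - (q : ℝ) • y) ((q : ℝ) * t)
  rw [abs_mul, abs_of_pos ht] at hqt
  rw [show Hx' - (q : ℝ) • Hx = (Hx' - (q : ℝ) • y) + (q : ℝ) • (y - Hx) by module]
  calc _ ≤ ‖aug (Hx' - (q : ℝ) • y) ((q : ℝ) * t)‖ * (1 + ‖y - Hx‖ / t) :=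
        norm_add_smul_le_mul_one_add ht (norm_le_norm_aug _ _) hqt
    _ ≤ α ^ ((m : ℝ) / 2) * ‖aug (Hx - y) t‖ * (1 + ‖y - Hx‖ / t) := by gcongr
    _ = _ := by rw [norm_aug, norm_sub_rev]

/-- if `u = (Hx' - q y, q t)` satisfies `‖u‖ ≤ α^(m/2) ‖v‖` where
`v = (Hx - y, t)`, then `‖Hx' - q·Hx‖ ≤ α^(m/2) √(‖w‖² + t²) (1 + ‖w‖/t)`. -/
theorem statement5 {n m : ℕ}
    (h : Fin m → EuclideanSpace ℝ (Fin n)) (hli : LinearIndependent ℝ h)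
    (x x' : Fin m → ℤ) (q : ℤ) (y : EuclideanSpace ℝ (Fin n))
    (t : ℝ) (ht : 0 < t) (α : ℝ) (hα : 0 < α)
    (hu : ‖aug ((∑ i, (x' i : ℝ) • h i) - (q : ℝ) • y) ((q : ℝ) * t)‖ ≤
      α ^ ((m : ℝ) / 2) * ‖aug ((∑ i, (x i : ℝ) • h i) - y) t‖) :
    ‖(∑ i, (x' i : ℝ) • h i) - (q : ℝ) • ∑ i, (x i : ℝ) • h i‖ ≤
      α ^ ((m : ℝ) / 2) * Real.sqrt (‖y - ∑ i, (x i : ℝ) • h i‖ ^ 2 + t ^ 2) *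
        (1 + ‖y - ∑ i, (x i : ℝ) • h i‖ / t) :=
  statement5_general h x x' q y t ht α hu
end

section
/- Let L be a lattice of rank m in ℝ^n with a shortest nonzero vector v that is α^{(m−1)/2}-unique, where α = 1/(δ − 1/4) and δ ∈ (1/4, 1). If b_1, …, b_m is an LLL-reduced basis of L with parameter δ, then b_1 is a nonzero integer multiple of v; if moreover v is primitive (v is not of the form q·u with u ∈ L and q ∈ ℤ, |q| ≥ 2), then b_1 = v or b_1 = −v. -/
open scoped BigOperators

/-!
Size reduction and the Lovász condition give `‖b*ₗ‖² ≤ α ‖b*ₗ₊₁‖²`, hence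
`‖b₁‖² ≤ α^j ‖b*ⱼ‖²` for every `j`. A nonzero lattice vector whose last nonzero coordinate is
the `j`-th one is at least as long as `b*ⱼ`, so `‖b₁‖ ≤ α^((m-1)/2) ‖v‖`, and uniqueness of `v`
makes `b₁` parallel to `v`. As `b₁` is a basis vector, `v = z • b₁` with `z ∈ ℤ`, and
minimality of `‖v‖` forces `z = ±1`.
-/

open InnerProductSpace

section GramSchmidt

variable {n m : ℕ} (b : Fin m → EuclideanSpace ℝ (Fin n))

theorem gso_eq_gramSchmidt_s7 : gso b = gramSchmidt ℝ b := rfl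

theorem gso_zero (hm : 0 < m) : gso b ⟨0, hm⟩ = b ⟨0, hm⟩ := by
  rw [gso_eq_gramSchmidt_s7, gramSchmidt_def, sub_eq_self]
  exact Finset.sum_eq_zero fun i hi => absurd (Finset.mem_Iio.mp hi) (Nat.not_lt_zero _)

theorem inner_gso_self_left (j : Fin m) : inner ℝ (b j) (gso b j) = ‖gso b j‖ ^ 2 := by
  have hproj : ∀ i ∈ Finset.Iio j,
      inner ℝ ((ℝ ∙ gramSchmidt ℝ b i).starProjection (b j)) (gramSchmidt ℝ b j) = 0 := by
    intro i hi
    obtain ⟨c, hc⟩ := Submodule.mem_span_singleton.mp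
      ((ℝ ∙ gramSchmidt ℝ b i).orthogonalProjectionOnto (b j)).2
    rw [Submodule.starProjection_apply, ← hc, real_inner_smul_left,
      gramSchmidt_orthogonal ℝ b (Finset.mem_Iio.mp hi).ne, mul_zero]
  rw [gso_eq_gramSchmidt_s7]
  conv_lhs => rw [gramSchmidt_def' ℝ b j]
  rw [inner_add_left, real_inner_self_eq_norm_sq, sum_inner, Finset.sum_eq_zero hproj, add_zero]

theorem inner_sum_smul_gso {c : Fin m → ℝ} {j : Fin m} (hc : ∀ i, j < i → c i = 0) :
    inner ℝ (∑ i, c i • b i) (gso b j) = c j * ‖gso b j‖ ^ 2 := by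
  rw [sum_inner, Finset.sum_eq_single j]
  · rw [real_inner_smul_left, inner_gso_self_left]
  · intro i _ hij
    rcases lt_or_gt_of_ne hij with h | h
    · rw [real_inner_smul_left, gso_eq_gramSchmidt_s7, real_inner_comm,
        gramSchmidt_inv_triangular ℝ b h, mul_zero]
    · rw [hc i h, zero_smul, inner_zero_left]
  · simp

theorem norm_gso_le_norm_sum_smul (hli : LinearIndependent ℝ b) {c : Fin m → ℝ} {j : Fin m}
    (hcj : 1 ≤ |c j|) (hc : ∀ i, j < i → c i = 0) :
    ‖gso b j‖ ≤ ‖∑ i, c i • b i‖ := by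
  have hpos : 0 < ‖gso b j‖ := norm_pos_iff.mpr (gramSchmidt_ne_zero j hli)
  have hcs := abs_real_inner_le_norm (∑ i, c i • b i) (gso b j)
  rw [inner_sum_smul_gso b hc, abs_mul, abs_of_nonneg (sq_nonneg ‖gso b j‖)] at hcs
  nlinarith

theorem exists_norm_gso_le (hli : LinearIndependent ℝ b) {u : EuclideanSpace ℝ (Fin n)}
    (hu : u ∈ latticePts b) (hu0 : u ≠ 0) : ∃ j, ‖gso b j‖ ≤ ‖u‖ := by
  obtain ⟨z, rfl⟩ := hu
  have hsupp : (Finset.univ.filter fun i => z i ≠ 0).Nonempty := by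
    by_contra h
    simp_all [Finset.not_nonempty_iff_eq_empty, Finset.filter_eq_empty_iff]
  obtain ⟨j, hj, hmax⟩ := Finset.exists_max_image _ id hsupp
  refine ⟨j, norm_gso_le_norm_sum_smul b hli ?_ fun i hij => ?_⟩
  · simp only [Finset.mem_filter, Finset.mem_univ, true_and] at hj
    exact_mod_cast Int.one_le_abs hj
  · by_contra h
    exact (hmax i (by simpa using h)).not_gt hij

end GramSchmidt

section LLL

variable {n m : ℕ} {b : Fin m → EuclideanSpace ℝ (Fin n)} {δ : ℝ}

theorem IsLLLReduced.norm_sq_gso_le (hred : IsLLLReduced δ b) (hδ : 1 / 4 < δ) {k l : Fin m}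
    (hkl : (l : ℕ) + 1 = k) :
    ‖gso b l‖ ^ 2 ≤ 1 / (δ - 1 / 4) * ‖gso b k‖ ^ 2 := by
  have hlk : l < k := Fin.lt_def.mpr (by omega)
  have horth : inner ℝ (gso b k) (gso b l) = 0 := gramSchmidt_orthogonal ℝ b hlk.ne'
  have hpyth : ‖gso b k + mu b k l • gso b l‖ ^ 2
      = ‖gso b k‖ ^ 2 + mu b k l ^ 2 * ‖gso b l‖ ^ 2 := by
    rw [norm_add_sq_real, real_inner_smul_right, horth, norm_smul, Real.norm_eq_abs, mul_pow,
      sq_abs]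
    ring
  have hmu : mu b k l ^ 2 ≤ 1 / 4 := by
    have := hred.1 k l hlk
    rw [← sq_abs]; nlinarith [abs_nonneg (mu b k l)]
  have hlov := hred.2 k l hkl
  rw [one_div, ← div_eq_inv_mul, le_div_iff₀ (by linarith)]
  nlinarith [mul_le_mul_of_nonneg_right hmu (sq_nonneg ‖gso b l‖)]

theorem IsLLLReduced.norm_sq_le_pow_mul_norm_sq_gso (hred : IsLLLReduced δ b) (hδ : 1 / 4 < δ)
    (hm : 0 < m) (j : Fin m) :
    ‖b ⟨0, hm⟩‖ ^ 2 ≤ (1 / (δ - 1 / 4)) ^ (j : ℕ) * ‖gso b j‖ ^ 2 := by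
  obtain ⟨j, hj⟩ := j
  induction j with
  | zero => rw [pow_zero, one_mul, gso_zero]
  | succ j ih =>
    have hα : 0 ≤ 1 / (δ - 1 / 4) := one_div_nonneg.mpr (by linarith)
    calc ‖b ⟨0, hm⟩‖ ^ 2 ≤ (1 / (δ - 1 / 4)) ^ j * ‖gso b ⟨j, by omega⟩‖ ^ 2 := ih (by omega)
      _ ≤ (1 / (δ - 1 / 4)) ^ j * (1 / (δ - 1 / 4) * ‖gso b ⟨j + 1, hj⟩‖ ^ 2) :=
        mul_le_mul_of_nonneg_left (hred.norm_sq_gso_le hδ rfl) (pow_nonneg hα j)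
      _ = (1 / (δ - 1 / 4)) ^ (j + 1) * ‖gso b ⟨j + 1, hj⟩‖ ^ 2 := by ring

theorem IsLLLReduced.norm_le_rpow_mul_norm (hred : IsLLLReduced δ b) (hδ : δ ∈ Set.Ioo (1 / 4) 1)
    (hli : LinearIndependent ℝ b) (hm : 0 < m) {u : EuclideanSpace ℝ (Fin n)}
    (hu : u ∈ latticePts b) (hu0 : u ≠ 0) :
    ‖b ⟨0, hm⟩‖ ≤ (1 / (δ - 1 / 4)) ^ (((m : ℝ) - 1) / 2) * ‖u‖ := by
  set α := 1 / (δ - 1 / 4)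
  have hα : 1 ≤ α := by
    rw [le_div_iff₀ (by linarith [hδ.1])]; linarith [hδ.2]
  obtain ⟨j, hj⟩ := exists_norm_gso_le b hli hu hu0
  have hsq : ‖b ⟨0, hm⟩‖ ^ 2 ≤ α ^ (m - 1) * ‖u‖ ^ 2 :=
    calc ‖b ⟨0, hm⟩‖ ^ 2 ≤ α ^ (j : ℕ) * ‖gso b j‖ ^ 2 :=
          hred.norm_sq_le_pow_mul_norm_sq_gso hδ.1 hm j
      _ ≤ α ^ (m - 1) * ‖u‖ ^ 2 := by
          gcongr
          omega
  have hrpow : α ^ (((m : ℝ) - 1) / 2) = √(α ^ (m - 1)) := by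
    rw [Real.sqrt_eq_rpow, ← Real.rpow_natCast, ← Real.rpow_mul (by linarith),
      Nat.cast_sub hm, Nat.cast_one, div_eq_mul_one_div]
  rw [hrpow, ← Real.sqrt_sq (norm_nonneg u), ← Real.sqrt_mul (by positivity)]
  exact Real.le_sqrt_of_sq_le hsq

end LLL

theorem exists_int_smul_of_eq_smul {n m : ℕ} {b : Fin m → EuclideanSpace ℝ (Fin n)}
    (hli : LinearIndependent ℝ b) {v : EuclideanSpace ℝ (Fin n)} (hv : v ∈ latticePts b)
    {i : Fin m} {a : ℝ} (h : b i = a • v) : ∃ z : ℤ, v = (z : ℝ) • b i := by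
  obtain ⟨z, rfl⟩ := hv
  have ha : a ≠ 0 := by rintro rfl; exact hli.ne_zero i (by simpa using h)
  have hsingle : ∑ k, (Pi.single i a⁻¹ : Fin m → ℝ) k • b k = a⁻¹ • b i :=
    (Fintype.sum_eq_single i fun k hk => by rw [Pi.single_eq_of_ne hk, zero_smul]).trans
      (by rw [Pi.single_eq_same])
  have hcoord : ∑ k, (z k : ℝ) • b k = ∑ k, (Pi.single i a⁻¹ : Fin m → ℝ) k • b k := by
    rw [hsingle, h, smul_smul, inv_mul_cancel₀ ha, one_smul]
  refine ⟨z i, ?_⟩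
  rw [hcoord, hsingle, Fintype.linearIndependent_iffₛ.mp hli _ _ hcoord i, Pi.single_eq_same]

theorem eq_or_eq_neg_of_eq_int_smul {E : Type*} [NormedAddCommGroup E] [Module ℝ E]
    [NormSMulClass ℝ E] {v w : E} {z : ℤ} (h : v = (z : ℝ) • w) (hv : v ≠ 0) (hle : ‖v‖ ≤ ‖w‖) :
    w = v ∨ w = -v := by
  have hw : 0 < ‖w‖ := norm_pos_iff.mpr (by rintro rfl; simp_all)
  have hz0 : z ≠ 0 := by rintro rfl; simp_all
  have hz1 : |(z : ℝ)| ≤ 1 := by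
    rw [h, norm_smul, Real.norm_eq_abs] at hle; nlinarith
  have hz : z = 1 ∨ z = -1 := by
    have : |z| ≤ 1 := by exact_mod_cast hz1
    rw [abs_le] at this; omega
  rcases hz with rfl | rfl <;> simp [h]

/-- if a lattice has an `α^((m-1)/2)`-unique shortest vector `v` and
`b` is an LLL-reduced basis, then `b_1` is a nonzero integer multiple of `v`;
if moreover `v` is primitive then `b_1 = ±v`. -/
theorem statement7 {n m : ℕ} (hm : 0 < m)
    (b : Fin m → EuclideanSpace ℝ (Fin n)) (hli : LinearIndependent ℝ b)
    (δ : ℝ) (hδ : δ ∈ Set.Ioo (1/4 : ℝ) 1)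
    (hred : IsLLLReduced δ b)
    (α : ℝ) (hα : α = 1 / (δ - 1/4))
    (v : EuclideanSpace ℝ (Fin n))
    (hvL : v ∈ latticePts b) (hv0 : v ≠ 0)
    (hshort : ∀ u ∈ latticePts b, u ≠ 0 → ‖v‖ ≤ ‖u‖)
    (huniq : ∀ u ∈ latticePts b, ‖u‖ ≤ α ^ (((m : ℝ) - 1) / 2) * ‖v‖ →
      ¬ LinearIndependent ℝ ![u, v]) :
    (∃ q : ℤ, q ≠ 0 ∧ b ⟨0, hm⟩ = (q : ℝ) • v) ∧
      ((∀ u ∈ latticePts b, ∀ q : ℤ, 2 ≤ |q| → v ≠ (q : ℝ) • u) →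
        b ⟨0, hm⟩ = v ∨ b ⟨0, hm⟩ = -v) := by
  have hb0L : b ⟨0, hm⟩ ∈ latticePts b :=
    ⟨Pi.single ⟨0, hm⟩ 1, by simp [Pi.single_apply, ite_smul]⟩
  have hdep := huniq _ hb0L (hα ▸ hred.norm_le_rpow_mul_norm hδ hli hm hvL hv0)
  rw [linearIndependent_fin2] at hdep
  push Not at hdep
  obtain ⟨a, ha⟩ := hdep (by simpa using hv0)
  obtain ⟨z, hz⟩ := exists_int_smul_of_eq_smul hli hvL (by simpa using ha.symm)
  rcases eq_or_eq_neg_of_eq_int_smul hz hv0 (hshort _ hb0L (hli.ne_zero _)) with h | h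
  · exact ⟨⟨1, one_ne_zero, by simp [h]⟩, fun _ => Or.inl h⟩
  · exact ⟨⟨-1, by norm_num, by simp [h]⟩, fun _ => Or.inr h⟩
end
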